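/- Let (X,d) be a metric space and endow X̃ := X × [0,1] with the metric ρ((x,s),(y,t)) := d(x,y) + |s−t|. Then the intrinsic distances satisfy ρ_I((x,s),(y,t)) = d_I(x,y) + |s−t| for all (x,s),(y,t) ∈ X̃, as an identity in [0,+∞]. -/

import Mathlib

open Filter Topology Set MeasureTheory
open scoped ENNReal NNReal

/-- The local (descent) slope of `u` at `x`, relative to the ambient set `A`. -/
noncomputable def locSlopeOn {X : Type*} [PseudoMetricSpace X] (u : X → ℝ) (A : Set X) (x : X) :
    ℝ≥0∞ :=
  Filter.limsup (fun y => ENNReal.ofReal (max (u x - u y) 0 / dist x y)) (𝓝[A \ {x}] x)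

/-- The local (descent) slope of `u` at `x`. -/
noncomputable def locSlope {X : Type*} [PseudoMetricSpace X] (u : X → ℝ) (x : X) : ℝ≥0∞ :=
  locSlopeOn u Set.univ x

/-- The intrinsic (length) distance between two points. -/
noncomputable def intrinsicDist {X : Type*} [PseudoMetricSpace X] (x y : X) : ℝ≥0∞ :=
  ⨅ (T : ℝ) (_ : 0 ≤ T) (γ : ℝ → X) (_ : ContinuousOn γ (Set.Icc 0 T))
    (_ : γ 0 = x) (_ : γ T = y), eVariationOn γ (Set.Icc 0 T)

/-- Compatibility condition (CC). -/
def SatisfiesCC {X : Type*} [PseudoMetricSpace X] (Ω : Set X) (ℓ g : X → ℝ) : Prop :=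
  ∀ x ∈ frontier Ω, ∀ y ∈ frontier Ω, ∀ T > (0:ℝ), ∀ γ : ℝ → X,
    LipschitzOnWith 1 γ (Set.Icc 0 T) → Set.MapsTo γ (Set.Icc 0 T) (closure Ω) →
    γ 0 = y → γ T = x → Set.MapsTo γ (Set.Ioo 0 T) Ω →
    g x - g y ≤ ∫ t in (0:ℝ)..T, ℓ (γ t)

/-- Continuous pointwise solution of the slope eikonal equation. -/
def IsEikonalSol {X : Type*} [PseudoMetricSpace X] (Ω : Set X) (ℓ g u : X → ℝ) : Prop :=
  ContinuousOn u (closure Ω) ∧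
  (∀ x ∈ Ω, locSlopeOn u (closure Ω) x = ENNReal.ofReal (ℓ x)) ∧
  ∀ x ∈ frontier Ω, u x = g x

/-- Eikonal space. -/
def IsEikonalSpace (X : Type*) [MetricSpace X] : Prop :=
  ∀ Ω : Set X, IsOpen Ω → Ω.Nonempty → Ω ≠ Set.univ →
    ∀ ℓ g : X → ℝ, ContinuousOn ℓ Ω → (∃ M, ∀ x ∈ Ω, |ℓ x| ≤ M) →
      (∃ c > 0, ∀ x ∈ Ω, c ≤ ℓ x) → ContinuousOn g (frontier Ω) →
      SatisfiesCC Ω ℓ g → ∃ u : X → ℝ, IsEikonalSol Ω ℓ g u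

/-- The `E_{1,0}` property. -/
def HasE10 (X : Type*) [MetricSpace X] : Prop :=
  ∀ K : Set X, IsClosed K → K.Nonempty →
    ∃ u : X → ℝ, Continuous u ∧ (∀ x ∉ K, locSlope u x = 1) ∧ ∀ x ∈ K, u x = 0

/-- The `ℓ¹` (sum) metric on a product of two metric spaces. -/
noncomputable def sumMetric (X Y : Type*) [MetricSpace X] [MetricSpace Y] :
    MetricSpace (X × Y) where
  dist p q := dist p.1 q.1 + dist p.2 q.2
  dist_self p := by simp
  dist_comm p q := by simp [dist_comm]
  dist_triangle p q r := by
    have h1 := dist_triangle p.1 q.1 r.1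
    have h2 := dist_triangle p.2 q.2 r.2
    try simp only
    linarith
  eq_of_dist_eq_zero := by
    intro p q h
    try simp only at h
    have n1 : (0:ℝ) ≤ dist p.1 q.1 := dist_nonneg
    have n2 : (0:ℝ) ≤ dist p.2 q.2 := dist_nonneg
    have e1 : dist p.1 q.1 = 0 := by linarith
    have e2 : dist p.2 q.2 = 0 := by linarith
    have := eq_of_dist_eq_zero e1
    have := eq_of_dist_eq_zero e2
    exact Prod.ext ‹p.1 = q.1› ‹p.2 = q.2›

/-!
For the ℓ¹ metric, a curve `t ↦ (γ t, σ t)` has length at least `len γ + |σ 0 - σ T|`: given a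
partition for `γ`, cut the parameter interval at its first and last points, use the partition on
the middle piece and the triangle inequality for `σ` on the two outer pieces. Conversely, the
embeddings `x ↦ (x, s)` and `s ↦ (x, s)` are `1`-Lipschitz, so moving first horizontally and then
vertically along a segment of `[0,1]` shows `ρ_I ≤ d_I + |s - t|`.
-/

theorem eVariationOn_Icc_add_Icc {E : Type*} [PseudoEMetricSpace E] (f : ℝ → E) {a b c : ℝ}
    (hab : a ≤ b) (hbc : b ≤ c) :
    eVariationOn f (Icc a b) + eVariationOn f (Icc b c) = eVariationOn f (Icc a c) := by
  simpa only [univ_inter] using eVariationOn.Icc_add_Icc f hab hbc (mem_univ b)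

theorem eVariationOn_comp_sub_const {E : Type*} [PseudoEMetricSpace E] (f : ℝ → E) (a b c : ℝ) :
    eVariationOn (fun u => f (u - c)) (Icc a b) = eVariationOn f (Icc (a - c) (b - c)) := by
  rw [← image_sub_const_Icc,
    ← eVariationOn.comp_eq_of_monotoneOn f _ fun _ _ _ _ h => sub_le_sub_right h c]
  rfl

section IntrinsicDist

variable {X : Type*} [PseudoMetricSpace X]

theorem intrinsicDist_le_eVariationOn {x y : X} {T : ℝ} (hT : 0 ≤ T) {γ : ℝ → X}
    (hγ : ContinuousOn γ (Icc 0 T)) (h0 : γ 0 = x) (hT' : γ T = y) :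
    intrinsicDist x y ≤ eVariationOn γ (Icc 0 T) :=
  iInf_le_of_le T <| iInf_le_of_le hT <| iInf_le_of_le γ <| iInf_le_of_le hγ <|
    iInf_le_of_le h0 <| iInf_le_of_le hT' le_rfl

theorem le_intrinsicDist {x y : X} {c : ℝ≥0∞}
    (h : ∀ T, 0 ≤ T → ∀ γ : ℝ → X, ContinuousOn γ (Icc 0 T) → γ 0 = x → γ T = y →
      c ≤ eVariationOn γ (Icc 0 T)) :
    c ≤ intrinsicDist x y := by
  simpa only [intrinsicDist, le_iInf_iff] using h

theorem intrinsicDist_triangle (x y z : X) :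
    intrinsicDist x z ≤ intrinsicDist x y + intrinsicDist y z := by
  rw [intrinsicDist.eq_1 x y, intrinsicDist.eq_1 y z]
  simp only [ENNReal.iInf_add, ENNReal.add_iInf, le_iInf_iff]
  intro T₂ hT₂ γ₂ hγ₂ h₂0 h₂T T₁ hT₁ γ₁ hγ₁ h₁0 h₁T
  set γ : ℝ → X := fun u => if u ≤ T₁ then γ₁ u else γ₂ (u - T₁)
  have left : EqOn γ γ₁ (Icc 0 T₁) := fun u hu => if_pos hu.2
  have right : EqOn γ (fun u => γ₂ (u - T₁)) (Icc T₁ (T₁ + T₂)) := by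
    intro u hu
    rcases hu.1.eq_or_lt with rfl | h
    · simp [γ, h₁T, h₂0]
    · exact if_neg h.not_ge
  have hγ : ContinuousOn γ (Icc 0 (T₁ + T₂)) := by
    rw [← Icc_union_Icc_eq_Icc hT₁ (le_add_of_nonneg_right hT₂)]
    refine ContinuousOn.union_of_isClosed ?_ ?_ isClosed_Icc isClosed_Icc
    · exact hγ₁.congr left
    · refine (hγ₂.comp (continuous_sub_right T₁).continuousOn ?_).congr right
      exact fun u hu => ⟨sub_nonneg.2 hu.1, sub_le_iff_le_add'.2 hu.2⟩
  calc intrinsicDist x z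
      ≤ eVariationOn γ (Icc 0 (T₁ + T₂)) :=
        intrinsicDist_le_eVariationOn (add_nonneg hT₁ hT₂) hγ
          ((left ⟨le_rfl, hT₁⟩).trans h₁0)
          ((right ⟨le_add_of_nonneg_right hT₂, le_rfl⟩).trans (by simp [h₂T]))
    _ = eVariationOn γ₁ (Icc 0 T₁) + eVariationOn γ₂ (Icc 0 T₂) := by
        rw [← eVariationOn_Icc_add_Icc γ hT₁ (le_add_of_nonneg_right hT₂),
          eVariationOn.eq_of_eqOn left, eVariationOn.eq_of_eqOn right,
          eVariationOn_comp_sub_const, sub_self, add_sub_cancel_left]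

theorem LipschitzWith.intrinsicDist_le {Y : Type*} [PseudoMetricSpace Y] {f : X → Y}
    (hf : LipschitzWith 1 f) (x y : X) : intrinsicDist (f x) (f y) ≤ intrinsicDist x y := by
  refine le_intrinsicDist fun T hT γ hγ h0 hT' => ?_
  calc intrinsicDist (f x) (f y)
      ≤ eVariationOn (f ∘ γ) (Icc 0 T) :=
        intrinsicDist_le_eVariationOn hT (hf.continuous.comp_continuousOn hγ)
          (by simp [h0]) (by simp [hT'])
    _ ≤ eVariationOn γ (Icc 0 T) := by
        simpa only [ENNReal.coe_one, one_mul] using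
          hf.lipschitzOnWith.comp_eVariationOn_le (mapsTo_univ γ (Icc 0 T))

end IntrinsicDist

theorem Convex.intrinsicDist_le_edist {E : Type*} [NormedAddCommGroup E] [NormedSpace ℝ E]
    {s : Set E} (hs : Convex ℝ s) (x y : s) : intrinsicDist x y ≤ edist x y := by
  set γ : ℝ → s := fun u =>
    ⟨x + (projIcc 0 1 zero_le_one u : ℝ) • ((y : E) - x),
      hs.add_smul_sub_mem x.2 y.2 (projIcc 0 1 zero_le_one u).2⟩
  have hγ : LipschitzWith ‖(y : E) - x‖₊ γ := by
    refine LipschitzWith.of_dist_le_mul fun u v => ?_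
    have hproj := (LipschitzWith.projIcc (zero_le_one' ℝ)).dist_le_mul u v
    rw [Subtype.dist_eq, dist_eq_norm, add_sub_add_left_eq_sub, ← sub_smul, norm_smul,
      ← dist_eq_norm, coe_nnnorm, mul_comm]
    rw [Subtype.dist_eq, NNReal.coe_one, one_mul] at hproj
    exact mul_le_mul_of_nonneg_left hproj (norm_nonneg _)
  have hid : eVariationOn id (Icc (0 : ℝ) 1) = 1 := by
    simpa only [inter_self, id_eq, sub_zero, ENNReal.ofReal_one] using
      (monotoneOn_id (s := Icc (0 : ℝ) 1)).eVariationOn_eq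
        (left_mem_Icc.2 zero_le_one) (right_mem_Icc.2 zero_le_one)
  calc intrinsicDist x y
      ≤ eVariationOn γ (Icc 0 1) :=
        intrinsicDist_le_eVariationOn zero_le_one hγ.continuous.continuousOn
          (by simp [γ]) (by ext; simp [γ])
    _ ≤ ‖(y : E) - x‖₊ * eVariationOn id (Icc (0 : ℝ) 1) :=
        hγ.lipschitzOnWith.comp_eVariationOn_le (mapsTo_univ _ _)
    _ = edist x y := by
        rw [hid, mul_one, edist_comm, Subtype.edist_eq, edist_eq_enorm_sub, enorm_eq_nnnorm]

/-- A type synonym for `X × Y`, since `X × Y` itself carries the sup metric as an instance.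
Points are built with `SumProd.mk`: an anonymous pair `(x, y)` would elaborate in `X × Y`. -/
def SumProd (X Y : Type*) : Type _ := X × Y

namespace SumProd

variable {X Y : Type*}

def mk (x : X) (y : Y) : SumProd X Y := (x, y)

@[simp] theorem fst_mk (x : X) (y : Y) : (mk x y).1 = x := rfl

@[simp] theorem snd_mk (x : X) (y : Y) : (mk x y).2 = y := rfl

variable [MetricSpace X] [MetricSpace Y]

noncomputable instance : MetricSpace (SumProd X Y) := sumMetric X Y

theorem edist_eq (p q : SumProd X Y) : edist p q = edist p.1 q.1 + edist p.2 q.2 := by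
  rw [edist_dist, edist_dist, edist_dist]
  exact ENNReal.ofReal_add dist_nonneg dist_nonneg

theorem edist_fst_le (p q : SumProd X Y) : edist p.1 q.1 ≤ edist p q :=
  (edist_eq p q).symm ▸ le_self_add

theorem edist_snd_le (p q : SumProd X Y) : edist p.2 q.2 ≤ edist p q :=
  (edist_eq p q).symm ▸ le_add_self

theorem lipschitzWith_fst : LipschitzWith 1 (fun p : SumProd X Y => p.1) :=
  LipschitzWith.of_edist_le edist_fst_le

theorem lipschitzWith_mk_left (y : Y) : LipschitzWith 1 (fun x : X => mk x y) :=
  LipschitzWith.of_edist_le fun x x' => by simp [edist_eq]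

theorem lipschitzWith_mk_right (x : X) : LipschitzWith 1 (fun y : Y => mk x y) :=
  LipschitzWith.of_edist_le fun y y' => by simp [edist_eq]

theorem sum_edist_fst_add_edist_snd_le (δ : ℝ → SumProd X Y) {u : ℕ → ℝ} (hu : Monotone u)
    (n : ℕ) :
    (∑ i ∈ Finset.range n, edist (δ (u (i + 1))).1 (δ (u i)).1) + edist (δ (u 0)).2 (δ (u n)).2
      ≤ eVariationOn δ (Icc (u 0) (u n)) := by
  calc _ ≤ (∑ i ∈ Finset.range n, edist (δ (u (i + 1))).1 (δ (u i)).1)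
          + ∑ i ∈ Finset.range n, edist (δ (u (i + 1))).2 (δ (u i)).2 := by
        gcongr
        exact (edist_le_range_sum_edist (fun i => (δ (u i)).2) n).trans_eq
          (Finset.sum_congr rfl fun i _ => edist_comm _ _)
    _ = ∑ i ∈ Finset.range n, edist (δ (u (i + 1))) (δ (u i)) := by
        simp only [edist_eq, Finset.sum_add_distrib]
    _ ≤ eVariationOn δ (Icc (u 0) (u n)) := by
        rw [Finset.range_eq_Ico]
        exact eVariationOn.sum_le_of_monotoneOn_Icc (hu.monotoneOn _)
          fun i hi => ⟨hu hi.1, hu hi.2⟩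

theorem eVariationOn_fst_add_edist_snd_le (δ : ℝ → SumProd X Y) {a b : ℝ} (hab : a ≤ b) :
    eVariationOn (fun t => (δ t).1) (Icc a b) + edist (δ a).2 (δ b).2
      ≤ eVariationOn δ (Icc a b) := by
  have : Nonempty _ := eVariationOn.nonempty_monotone_mem (nonempty_Icc.2 hab)
  rw [eVariationOn, ENNReal.iSup_add]
  refine iSup_le fun ⟨n, u, hu, us⟩ => ?_
  have ha : a ≤ u 0 := (us 0).1
  have hb : u n ≤ b := (us n).2
  have hn : u 0 ≤ u n := hu n.zero_le
  calc (∑ i ∈ Finset.range n, edist (δ (u (i + 1))).1 (δ (u i)).1) + edist (δ a).2 (δ b).2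
      ≤ edist (δ a).2 (δ (u 0)).2
          + ((∑ i ∈ Finset.range n, edist (δ (u (i + 1))).1 (δ (u i)).1)
            + edist (δ (u 0)).2 (δ (u n)).2)
          + edist (δ (u n)).2 (δ b).2 := by
        grw [edist_triangle4 (δ a).2 (δ (u 0)).2 (δ (u n)).2 (δ b).2]
        exact le_of_eq (by ring)
    _ ≤ eVariationOn δ (Icc a (u 0)) + eVariationOn δ (Icc (u 0) (u n))
          + eVariationOn δ (Icc (u n) b) := by
        gcongr
        · exact (edist_snd_le _ _).trans
            (eVariationOn.edist_le δ (left_mem_Icc.2 ha) (right_mem_Icc.2 ha))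
        · exact sum_edist_fst_add_edist_snd_le δ hu n
        · exact (edist_snd_le _ _).trans
            (eVariationOn.edist_le δ (left_mem_Icc.2 hb) (right_mem_Icc.2 hb))
    _ = eVariationOn δ (Icc a b) := by
        rw [eVariationOn_Icc_add_Icc δ ha hn, eVariationOn_Icc_add_Icc δ (ha.trans hn) hb]

theorem intrinsicDist_fst_add_edist_snd_le (p q : SumProd X Y) :
    intrinsicDist p.1 q.1 + edist p.2 q.2 ≤ intrinsicDist p q := by
  refine le_intrinsicDist fun T hT δ hδ h0 hT' => ?_
  subst h0 hT'
  calc intrinsicDist (δ 0).1 (δ T).1 + edist (δ 0).2 (δ T).2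
      ≤ eVariationOn (fun t => (δ t).1) (Icc 0 T) + edist (δ 0).2 (δ T).2 := by
        gcongr
        exact intrinsicDist_le_eVariationOn hT
          (lipschitzWith_fst.continuous.comp_continuousOn hδ) rfl rfl
    _ ≤ eVariationOn δ (Icc 0 T) := eVariationOn_fst_add_edist_snd_le δ hT

theorem intrinsicDist_le_fst_add_snd (p q : SumProd X Y) :
    intrinsicDist p q ≤ intrinsicDist p.1 q.1 + intrinsicDist p.2 q.2 :=
  calc intrinsicDist p q
      ≤ intrinsicDist p (mk q.1 p.2) + intrinsicDist (mk q.1 p.2) q :=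
        intrinsicDist_triangle _ _ _
    _ ≤ intrinsicDist p.1 q.1 + intrinsicDist p.2 q.2 :=
        add_le_add ((lipschitzWith_mk_left p.2).intrinsicDist_le p.1 q.1)
          ((lipschitzWith_mk_right q.1).intrinsicDist_le p.2 q.2)

end SumProd

/-- For the sum metric `ρ` on `X × [0,1]`, the intrinsic distances satisfy
`ρ_I((x,s),(y,t)) = d_I(x,y) + |s − t|` in `[0,∞]`. -/
theorem stmt19 {X : Type*} [MetricSpace X] (p q : X × (Set.Icc (0:ℝ) 1)) :
    @intrinsicDist _ (sumMetric X (Set.Icc (0:ℝ) 1)).toPseudoMetricSpace p q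
      = intrinsicDist p.1 q.1 + ENNReal.ofReal |(p.2 : ℝ) - (q.2 : ℝ)| := by
  have hedist : edist p.2 q.2 = ENNReal.ofReal |(p.2 : ℝ) - (q.2 : ℝ)| := by
    rw [Subtype.edist_eq, edist_dist, Real.dist_eq]
  rw [← hedist]
  refine le_antisymm ?_ (SumProd.intrinsicDist_fst_add_edist_snd_le (X := X) p q)
  calc _ ≤ intrinsicDist p.1 q.1 + intrinsicDist p.2 q.2 :=
        SumProd.intrinsicDist_le_fst_add_snd (X := X) p q
    _ ≤ intrinsicDist p.1 q.1 + edist p.2 q.2 := by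
        gcongr
        exact (convex_Icc 0 1).intrinsicDist_le_edist _ _
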